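/- arXiv:math/9902096 — 3 statements merged into one kernel-verified Lean document; each statement's English description precedes it below -/
import Mathlib

section
/- Let A be an associative unital R-algebra with a cell datum (Λ, M, C, *, r). Then for each λ ∈ Λ there exists a function φ : M(λ) × M(λ) → R such that for all S₁, T₁, S₂, T₂ ∈ M(λ), the element C_{S₁,T₁}^λ · C_{S₂,T₂}^λ − φ(T₁,S₂)·C_{S₁,T₂}^λ lies in A(<λ); in particular φ(T₁,S₂) is independent of S₁ and T₂. -/
open scoped BigOperators

/-- A cell datum `(Λ, M, C, *, r)` for an associative unital `R`-algebra `A`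
(Graham–Lehrer).  `basis`/`basis_eq` say that `C` has image an `R`-basis of `A`,
`inj` says `C` is injective, `star` is the `R`-linear involutory anti-automorphism with
`(C_{S,T})* = C_{T,S}`, and `mul_C` is the multiplication axiom modulo `A(<λ)`. -/
structure CellDatum (R : Type*) [CommRing R] (A : Type*) [Ring A] [Algebra R A]
    (Λ : Type*) [PartialOrder Λ] (M : Λ → Type*) [∀ l, Fintype (M l)] where
  C : ∀ l : Λ, M l → M l → A
  inj : Function.Injective fun p : Σ l : Λ, M l × M l => C p.1 p.2.1 p.2.2
  basis : Module.Basis (Σ l : Λ, M l × M l) R A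
  basis_eq : ∀ p : Σ l : Λ, M l × M l, basis p = C p.1 p.2.1 p.2.2
  star : A →ₗ[R] A
  star_star : ∀ a : A, star (star a) = a
  star_mul : ∀ a b : A, star (a * b) = star b * star a
  star_C : ∀ (l : Λ) (S T : M l), star (C l S T) = C l T S
  r : A → ∀ l : Λ, M l → M l → R
  mul_C : ∀ (a : A) (l : Λ) (S T : M l),
    a * C l S T - ∑ S' : M l, r a l S' S • C l S' T ∈
      Submodule.span R {x : A | ∃ μ : Λ, μ < l ∧ ∃ S'' T'' : M μ, x = C μ S'' T''}

variable {R A Λ : Type*} [CommRing R] [Ring A] [Algebra R A] [PartialOrder Λ]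
  {M : Λ → Type*} [∀ l, Fintype (M l)]

/-- `A(<λ)`: the `R`-span of the cell basis elements indexed by `μ < λ`. -/
def CellDatum.Aless (D : CellDatum R A Λ M) (l : Λ) : Submodule R A :=
  Submodule.span R {x : A | ∃ μ : Λ, μ < l ∧ ∃ S'' T'' : M μ, x = D.C μ S'' T''}

/-- A coideal of the poset `Λ`: a subset closed upwards. -/
def IsCoideal {Λ : Type*} [PartialOrder Λ] (P : Set Λ) : Prop :=
  ∀ ⦃a b : Λ⦄, a ∈ P → a < b → b ∈ P

/-- `I_P`: the `R`-span of the cell basis elements `C_{S,T}^λ` with `λ ∉ P`. -/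
def CellDatum.IP (D : CellDatum R A Λ M) (P : Set Λ) : Submodule R A :=
  Submodule.span R {x : A | ∃ l : Λ, l ∉ P ∧ ∃ S T : M l, x = D.C l S T}

/-!
Write `a = C_{S₁,T₁}`. The multiplication axiom gives
`C_{S₁,T₁} C_{S₂,T₂} ≡ ∑_{S'} r_a(S',S₂) C_{S',T₂}` modulo `A(<λ)`; applying `*` and the axiom
for `C_{T₂,S₂}` shows that the same product is also `≡ ∑_{T'} r(T',T₁) C_{S₁,T'}`. Comparing
coefficients in the cell basis, only the term `S' = S₁` survives, and its coefficient
`r_{C_{S₁,T₁}}(S₁,S₂) = r_{C_{T₂,S₂}}(T₂,T₁)` can depend neither on `T₂` (left side) nor on `S₁`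
(right side).
-/

namespace CellDatum

variable (D : CellDatum R A Λ M)

lemma Aless_eq_span_basis (l : Λ) :
    D.Aless l = Submodule.span R (D.basis '' {p | p.1 < l}) := by
  unfold Aless
  congr 1
  ext x
  constructor
  · rintro ⟨μ, hμ, S, T, rfl⟩
    exact ⟨⟨μ, S, T⟩, hμ, D.basis_eq _⟩
  · rintro ⟨⟨μ, S, T⟩, hμ, rfl⟩
    exact ⟨μ, hμ, S, T, D.basis_eq _⟩

lemma repr_eq_zero_of_mem_Aless {l : Λ} {x : A} (hx : x ∈ D.Aless l) (S T : M l) :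
    D.basis.repr x ⟨l, S, T⟩ = 0 := by
  rw [Aless_eq_span_basis, Module.Basis.mem_span_image] at hx
  by_contra h
  exact lt_irrefl l (hx (Finsupp.mem_support_iff.2 h))

lemma repr_C (l : Λ) (S T : M l) :
    D.basis.repr (D.C l S T) = Finsupp.single ⟨l, S, T⟩ 1 := by
  rw [← D.basis_eq ⟨l, S, T⟩, Module.Basis.repr_self]

lemma repr_star (x : A) (l : Λ) (S T : M l) :
    D.basis.repr (D.star x) ⟨l, T, S⟩ = D.basis.repr x ⟨l, S, T⟩ := by
  let swap := Equiv.sigmaCongrRight fun μ => Equiv.prodComm (M μ) (M μ)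
  suffices h : (Finsupp.lapply (swap ⟨l, S, T⟩)).comp (D.basis.repr.toLinearMap.comp D.star) =
      (Finsupp.lapply ⟨l, S, T⟩).comp D.basis.repr.toLinearMap from LinearMap.congr_fun h x
  refine D.basis.ext fun ⟨μ, U, V⟩ => ?_
  simp only [LinearMap.comp_apply, LinearEquiv.coe_coe, Finsupp.lapply_apply, D.basis_eq,
    D.star_C, repr_C]
  exact Finsupp.single_apply_left swap.injective ⟨μ, U, V⟩ ⟨l, S, T⟩ 1

lemma repr_mul_C_eq_repr_sum (a : A) (l : Λ) (S T S' T' : M l) :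
    D.basis.repr (a * D.C l S T) ⟨l, S', T'⟩ =
      ∑ S'' : M l,
        D.r a l S'' S * Finsupp.single (⟨l, S'', T⟩ : Σ μ, M μ × M μ) 1 ⟨l, S', T'⟩ := by
  have h := D.repr_eq_zero_of_mem_Aless (D.mul_C a l S T) S' T'
  rw [map_sub, Finsupp.sub_apply, sub_eq_zero] at h
  simp only [h, map_sum, map_smul, Finsupp.finsetSum_apply, Finsupp.smul_apply, repr_C,
    smul_eq_mul]

lemma repr_mul_C_self (a : A) (l : Λ) (S T S' : M l) :
    D.basis.repr (a * D.C l S T) ⟨l, S', T⟩ = D.r a l S' S := by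
  classical
  simp [repr_mul_C_eq_repr_sum, Finsupp.single_apply]

lemma repr_mul_C_of_ne (a : A) (l : Λ) {T T' : M l} (h : T' ≠ T) (S S' : M l) :
    D.basis.repr (a * D.C l S T) ⟨l, S', T'⟩ = 0 := by
  classical
  simp [repr_mul_C_eq_repr_sum, h.symm]

lemma repr_C_mul_C_eq_swap (l : Λ) (S₁ T₁ S₂ T₂ S T : M l) :
    D.basis.repr (D.C l S₁ T₁ * D.C l S₂ T₂) ⟨l, S, T⟩ =
      D.basis.repr (D.C l T₂ S₂ * D.C l T₁ S₁) ⟨l, T, S⟩ := by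
  rw [← repr_star, star_mul, star_C, star_C]

lemma r_C_eq_zero_of_ne {l : Λ} {S₁ S' : M l} (h : S' ≠ S₁) (T₁ S₂ : M l) :
    D.r (D.C l S₁ T₁) l S' S₂ = 0 := by
  rw [← D.repr_mul_C_self _ l S₂ S₂, D.repr_C_mul_C_eq_swap, D.repr_mul_C_of_ne _ l h]

lemma r_C_self_eq (l : Λ) (S₁ T₁ S₂ T₂ : M l) :
    D.r (D.C l S₁ T₁) l S₁ S₂ = D.r (D.C l T₂ S₂) l T₂ T₁ := by
  rw [← D.repr_mul_C_self _ l S₂ T₂, D.repr_C_mul_C_eq_swap, D.repr_mul_C_self]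

lemma C_mul_C_sub_smul_mem_Aless (l : Λ) (S₁ T₁ S₂ T₂ : M l) :
    D.C l S₁ T₁ * D.C l S₂ T₂ - D.r (D.C l S₁ T₁) l S₁ S₂ • D.C l S₁ T₂ ∈ D.Aless l := by
  have h := D.mul_C (D.C l S₁ T₁) l S₂ T₂
  rwa [Finset.sum_eq_single S₁ (fun S' _ hS' => by rw [D.r_C_eq_zero_of_ne hS', zero_smul])
    (by simp)] at h

end CellDatum

/-- for each `λ ∈ Λ` there is a function `φ : M(λ) × M(λ) → R` such that
`C_{S₁,T₁} · C_{S₂,T₂} ≡ φ(T₁,S₂) · C_{S₁,T₂}` modulo `A(<λ)`; in particular `φ(T₁,S₂)`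
is independent of `S₁` and `T₂`. -/
theorem cellular_bilinear_form_exists (R A Λ : Type*) [CommRing R] [Ring A] [Algebra R A]
    [PartialOrder Λ] (M : Λ → Type*) [∀ l, Fintype (M l)] (D : CellDatum R A Λ M)
    (l : Λ) :
    ∃ φ : M l → M l → R, ∀ S₁ T₁ S₂ T₂ : M l,
      D.C l S₁ T₁ * D.C l S₂ T₂ - φ T₁ S₂ • D.C l S₁ T₂ ∈ D.Aless l := by
  refine ⟨fun T₁ S₂ => D.r (D.C l T₁ T₁) l T₁ S₂, fun S₁ T₁ S₂ T₂ => ?_⟩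
  have hφ : D.r (D.C l S₁ T₁) l S₁ S₂ = D.r (D.C l T₁ T₁) l T₁ S₂ := by
    rw [D.r_C_self_eq l S₁ T₁ S₂ T₁, ← D.r_C_self_eq l T₁ T₁ S₂ T₁]
  simpa only [hφ] using D.C_mul_C_sub_smul_mem_Aless l S₁ T₁ S₂ T₂
end

section
/- Let A be an associative unital R-algebra with a cell datum (Λ, M, C, *, r) and let P be a coideal of Λ. Then the R-submodule I_P of A is a two-sided ideal of A: for all a ∈ A and x ∈ I_P, both a·x ∈ I_P and x·a ∈ I_P. -/
open scoped BigOperators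

variable {R A Λ : Type*} [CommRing R] [Ring A] [Algebra R A] [PartialOrder Λ]
  {M : Λ → Type*} [∀ l, Fintype (M l)]

/-! The multiplication axiom shows `a * C_{S,T}^λ ≡ ∑ r • C_{S',T}^λ` modulo `A(<λ)`, and for
`λ ∉ P` the coideal property puts all of `A(<λ)` into `I_P`; so `I_P` is a left ideal.
The involution `*` fixes `I_P` and reverses products, which turns this into right stability. -/

namespace CellDatum

variable (D : CellDatum R A Λ M) {P : Set Λ}

theorem C_mem_IP {l : Λ} (hl : l ∉ P) (S T : M l) : D.C l S T ∈ D.IP P :=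
  Submodule.subset_span ⟨l, hl, S, T, rfl⟩

theorem Aless_le_IP (hP : IsCoideal P) {l : Λ} (hl : l ∉ P) : D.Aless l ≤ D.IP P :=
  Submodule.span_le.2 fun _ ⟨μ, hμl, S, T, hx⟩ =>
    Submodule.subset_span ⟨μ, fun hμ => hl (hP hμ hμl), S, T, hx⟩

theorem mul_C_mem_IP (hP : IsCoideal P) (a : A) {l : Λ} (hl : l ∉ P) (S T : M l) :
    a * D.C l S T ∈ D.IP P := by
  have hsum : ∑ S' : M l, D.r a l S' S • D.C l S' T ∈ D.IP P :=
    Submodule.sum_mem _ fun S' _ => Submodule.smul_mem _ _ (D.C_mem_IP hl S' T)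
  simpa using add_mem (D.Aless_le_IP hP hl (D.mul_C a l S T)) hsum

theorem mul_mem_IP_left (hP : IsCoideal P) (a : A) {x : A} (hx : x ∈ D.IP P) :
    a * x ∈ D.IP P := by
  have hle : (D.IP P).map (LinearMap.mulLeft R a) ≤ D.IP P := by
    refine (Submodule.map_span_le _ _ _).2 ?_
    rintro _ ⟨l, hl, S, T, rfl⟩
    exact D.mul_C_mem_IP hP a hl S T
  exact hle ⟨x, hx, rfl⟩

theorem star_mem_IP {x : A} (hx : x ∈ D.IP P) : D.star x ∈ D.IP P := by
  have hle : (D.IP P).map D.star ≤ D.IP P := by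
    refine (Submodule.map_span_le _ _ _).2 ?_
    rintro _ ⟨l, hl, S, T, rfl⟩
    rw [D.star_C]
    exact D.C_mem_IP hl T S
  exact hle ⟨x, hx, rfl⟩

theorem mul_mem_IP_right (hP : IsCoideal P) (a : A) {x : A} (hx : x ∈ D.IP P) :
    x * a ∈ D.IP P := by
  rw [← D.star_star (x * a), D.star_mul]
  exact D.star_mem_IP (D.mul_mem_IP_left hP _ (D.star_mem_IP hx))

end CellDatum

/-- for a coideal `P` of `Λ`, the `R`-submodule `I_P` of `A` is a two-sided
ideal: for all `a ∈ A` and `x ∈ I_P`, both `a·x ∈ I_P` and `x·a ∈ I_P`. -/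
theorem IP_is_two_sided_ideal (R A Λ : Type*) [CommRing R] [Ring A] [Algebra R A]
    [PartialOrder Λ] (M : Λ → Type*) [∀ l, Fintype (M l)] (D : CellDatum R A Λ M)
    (P : Set Λ) (hP : IsCoideal P) :
    ∀ (a : A) (x : A), x ∈ D.IP P → a * x ∈ D.IP P ∧ x * a ∈ D.IP P :=
  fun a _ hx => ⟨D.mul_mem_IP_left hP a hx, D.mul_mem_IP_right hP a hx⟩
end

section
/- Let A be an associative unital R-algebra with a cell datum (Λ, M, C, *, r) of profinite type, and let Â be the associated procellular algebra. Then the R-linear map Φ from the R-module of all functions f : ∐_{λ∈Λ} M(λ) × M(λ) → R to ∏_{P∈Π} A_P, defined by sending f to the family whose P-th component is the (finite) sum Σ_{λ∈P, T,T'∈M(λ)} f(T,T')·ψ_P(C_{T,T'}^λ), is injective and its image is exactly Â. In other words, the elements of Â correspond bijectively to formal infinite sums Σ a(T,T')·C(T,T') with arbitrary coefficients a(T,T') ∈ R. -/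
open scoped BigOperators

variable {R A Λ : Type*} [CommRing R] [Ring A] [Algebra R A] [PartialOrder Λ]
  {M : Λ → Type*} [∀ l, Fintype (M l)]

/-- `Π`: the set of finite coideals of `Λ`. -/
def FiniteCoideal (Λ : Type*) [PartialOrder Λ] : Type _ :=
  {P : Set Λ // P.Finite ∧ IsCoideal P}

/-- The map `Φ` sending a coefficient function `f` on `∐_{λ∈Λ} M(λ) × M(λ)` to the family
whose `P`-th component is the (finite) sum `Σ_{λ∈P, T,T'∈M(λ)} f(T,T')·ψ_P(C_{T,T'}^λ)`
in `A_P = A/I_P`.  Here `J P` is the two-sided ideal with underlying set `I_P`. -/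
noncomputable def PhiMap (D : CellDatum R A Λ M)
    (J : ∀ _ : FiniteCoideal Λ, TwoSidedIdeal A) :
    ((Σ l : Λ, M l × M l) → R) →
      ∀ P : FiniteCoideal Λ, RingCon.Quotient (J P).ringCon :=
  fun f P => ∑ᶠ p ∈ {p : Σ l : Λ, M l × M l | p.1 ∈ P.1},
    f p • RingCon.mk' (J P).ringCon (D.C p.1 p.2.1 p.2.2)

/-- The procellular algebra `Â`, realised inside `∏_{P∈Π} A_P` as the families
`(a_P)_P` such that `ψ_{P₁,P₂}(a_{P₁}) = a_{P₂}` whenever `P₂ ⊆ P₁` (equivalently,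
any lift `a ∈ A` of `a_{P₁}` maps to `a_{P₂}` under `ψ_{P₂}`). -/
def Procellular (D : CellDatum R A Λ M)
    (J : ∀ _ : FiniteCoideal Λ, TwoSidedIdeal A) :
    Set (∀ P : FiniteCoideal Λ, RingCon.Quotient (J P).ringCon) :=
  {x | ∀ P₁ P₂ : FiniteCoideal Λ, P₂.1 ⊆ P₁.1 → ∀ a : A,
    RingCon.mk' (J P₁).ringCon a = x P₁ → RingCon.mk' (J P₂).ringCon a = x P₂}

/-!
The class of `a ∈ A` in `A_P = A/I_P` is determined by the coordinates of `a` in the cell basis at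
the cells `λ ∈ P`, so `Φ(f)_P` is the class of any `a` whose coordinates agree with `f` on `P`.
Testing at the principal coideals `⟨λ⟩`, which are finite by profiniteness, gives injectivity.
Conversely, a compatible family `x` equals `Φ(f)`, where `f(T,T')` is the `(T,T')`-coordinate of a
lift of `x_{⟨λ⟩}` for `T, T' ∈ M(λ)`: every coideal containing `λ` contains `⟨λ⟩`.
-/

lemma IsCoideal.Ici_subset {P : Set Λ} (hP : IsCoideal P) {l : Λ} (hl : l ∈ P) :
    Set.Ici l ⊆ P :=
  fun _ hm => (eq_or_lt_of_le hm).elim (· ▸ hl) (hP hl)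

lemma isCoideal_Ici (l : Λ) : IsCoideal (Set.Ici l) :=
  fun _ _ ha hab => le_trans ha hab.le

def FiniteCoideal.Ici (l : Λ) (hl : (Set.Ici l).Finite) : FiniteCoideal Λ :=
  ⟨Set.Ici l, hl, isCoideal_Ici l⟩

lemma Set.Finite.preimage_sigma_fst {ι : Type*} {β : ι → Type*} [∀ i, Finite (β i)]
    {s : Set ι} (hs : s.Finite) : (Sigma.fst ⁻¹' s : Set (Σ i, β i)).Finite :=
  hs.preimage' fun i _ => Set.range_sigmaMk (α := β) i ▸ Set.finite_range _

namespace CellDatum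

variable (D : CellDatum R A Λ M)

lemma mem_IP_iff_repr {P : Set Λ} {x : A} :
    x ∈ D.IP P ↔ ∀ p : Σ l, M l × M l, p.1 ∈ P → D.basis.repr x p = 0 := by
  have hgen : {x : A | ∃ l : Λ, l ∉ P ∧ ∃ S T : M l, x = D.C l S T} =
      D.basis '' {p | p.1 ∉ P} := by
    ext y
    constructor
    · rintro ⟨l, hl, S, T, rfl⟩
      exact ⟨⟨l, S, T⟩, hl, D.basis_eq _⟩
    · rintro ⟨⟨l, S, T⟩, hl, rfl⟩
      exact ⟨l, hl, S, T, D.basis_eq _⟩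
  rw [IP, hgen, Module.Basis.mem_span_image]
  refine ⟨fun h p hp => ?_, fun h p hp hpP => Finsupp.mem_support_iff.1 hp (h p hpP)⟩
  by_contra hne
  exact h (Finsupp.mem_support_iff.2 hne) hp

lemma repr_sum_smul_C (s : Finset (Σ l, M l × M l)) (g : (Σ l, M l × M l) → R)
    {q : Σ l, M l × M l} (hq : q ∈ s) :
    D.basis.repr (∑ p ∈ s, g p • D.C p.1 p.2.1 p.2.2) q = g q := by
  classical
  simp only [← D.basis_eq, map_sum, map_smul, Module.Basis.repr_self, Finsupp.coe_finsetSum,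
    Finset.sum_apply, Finsupp.smul_apply, Finsupp.single_apply, smul_eq_mul, mul_ite, mul_one,
    mul_zero, Finset.sum_ite_eq', if_pos hq]

lemma mk_eq_mk_iff {J : FiniteCoideal Λ → TwoSidedIdeal A}
    (hJ : ∀ (P : FiniteCoideal Λ) (x : A), x ∈ J P ↔ x ∈ D.IP P.1) (P : FiniteCoideal Λ)
    (a b : A) :
    RingCon.mk' (J P).ringCon a = RingCon.mk' (J P).ringCon b ↔
      ∀ p : Σ l, M l × M l, p.1 ∈ P.1 → D.basis.repr a p = D.basis.repr b p := by
  change (a : (J P).ringCon.Quotient) = b ↔ _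
  rw [RingCon.eq, TwoSidedIdeal.rel_iff, hJ, mem_IP_iff_repr]
  simp only [map_sub, Finsupp.sub_apply, sub_eq_zero]

end CellDatum

section PhiMap

variable (D : CellDatum R A Λ M) (J : FiniteCoideal Λ → TwoSidedIdeal A)

lemma PhiMap_add (f g : (Σ l, M l × M l) → R) :
    PhiMap D J (f + g) = PhiMap D J f + PhiMap D J g := by
  funext P
  simp only [PhiMap, Pi.add_apply, add_smul]
  exact finsum_mem_add_distrib P.2.1.preimage_sigma_fst

lemma PhiMap_smul (c : R) (f : (Σ l, M l × M l) → R) :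
    PhiMap D J (c • f) = c • PhiMap D J f := by
  funext P
  simp only [PhiMap, Pi.smul_apply, smul_eq_mul, mul_smul]
  exact (smul_finsum_mem P.2.1.preimage_sigma_fst).symm

lemma PhiMap_apply (f : (Σ l, M l × M l) → R) (P : FiniteCoideal Λ) :
    PhiMap D J f P = RingCon.mk' (J P).ringCon
      (∑ p ∈ P.2.1.preimage_sigma_fst.toFinset, f p • D.C p.1 p.2.1 p.2.2) :=
  (finsum_mem_eq_finite_toFinset_sum _ P.2.1.preimage_sigma_fst).trans
    (map_sum (RingCon.mk' (J P).ringCon) _ _).symm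

variable {D J}

lemma mk_eq_PhiMap_iff (hJ : ∀ (P : FiniteCoideal Λ) (x : A), x ∈ J P ↔ x ∈ D.IP P.1)
    {f : (Σ l, M l × M l) → R} {P : FiniteCoideal Λ} {a : A} :
    RingCon.mk' (J P).ringCon a = PhiMap D J f P ↔
      ∀ p : Σ l, M l × M l, p.1 ∈ P.1 → D.basis.repr a p = f p := by
  rw [PhiMap_apply, D.mk_eq_mk_iff hJ]
  refine forall₂_congr fun p hp => ?_
  rw [D.repr_sum_smul_C _ _ (by simpa using hp)]

lemma PhiMap_injective (hJ : ∀ (P : FiniteCoideal Λ) (x : A), x ∈ J P ↔ x ∈ D.IP P.1)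
    (hprofin : ∀ l : Λ, (Set.Ici l).Finite) : Function.Injective (PhiMap D J) := by
  intro f g hfg
  funext p
  let P := FiniteCoideal.Ici p.1 (hprofin p.1)
  obtain ⟨a, hf⟩ := RingCon.mk'_surjective _ (PhiMap D J f P)
  have hg : RingCon.mk' (J P).ringCon a = PhiMap D J g P := hf.trans (congrFun hfg P)
  rw [← (mk_eq_PhiMap_iff hJ).1 hf p le_rfl, (mk_eq_PhiMap_iff hJ).1 hg p le_rfl]

lemma PhiMap_mem_procellular (hJ : ∀ (P : FiniteCoideal Λ) (x : A), x ∈ J P ↔ x ∈ D.IP P.1)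
    (f : (Σ l, M l × M l) → R) : PhiMap D J f ∈ Procellular D J := by
  intro P₁ P₂ hP a ha
  rw [mk_eq_PhiMap_iff hJ] at ha ⊢
  exact fun p hp => ha p (hP hp)

lemma exists_PhiMap_eq_of_mem_procellular
    (hJ : ∀ (P : FiniteCoideal Λ) (x : A), x ∈ J P ↔ x ∈ D.IP P.1)
    (hprofin : ∀ l : Λ, (Set.Ici l).Finite) {x : ∀ P : FiniteCoideal Λ, (J P).ringCon.Quotient}
    (hx : x ∈ Procellular D J) : ∃ f, PhiMap D J f = x := by
  choose a ha using fun l => RingCon.mk'_surjective _ (x (FiniteCoideal.Ici l (hprofin l)))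
  refine ⟨fun p => D.basis.repr (a p.1) p, funext fun P => ?_⟩
  obtain ⟨b, hb⟩ := RingCon.mk'_surjective _ (x P)
  rw [← hb, eq_comm, mk_eq_PhiMap_iff hJ]
  intro q hq
  have hbq := hx P (FiniteCoideal.Ici q.1 (hprofin q.1)) (P.2.2.Ici_subset hq) b hb
  exact (D.mk_eq_mk_iff hJ _ _ _).1 (hbq.trans (ha q.1).symm) q le_rfl

end PhiMap

theorem procellular_eq_formal_sums_general (R A Λ : Type*) [CommRing R] [Ring A] [Algebra R A]
    [PartialOrder Λ] (M : Λ → Type*) [∀ l, Fintype (M l)] (D : CellDatum R A Λ M)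
    (hprofin : ∀ a : Λ, {l : Λ | a ≤ l}.Finite)
    (J : ∀ _ : FiniteCoideal Λ, TwoSidedIdeal A)
    (hJ : ∀ (P : FiniteCoideal Λ) (x : A), x ∈ J P ↔ x ∈ D.IP P.1) :
    (∀ f g : (Σ l : Λ, M l × M l) → R, PhiMap D J (f + g) = PhiMap D J f + PhiMap D J g) ∧
    (∀ (c : R) (f : (Σ l : Λ, M l × M l) → R), PhiMap D J (c • f) = c • PhiMap D J f) ∧
    Function.Injective (PhiMap D J) ∧
    Set.range (PhiMap D J) = Procellular D J :=
  ⟨PhiMap_add D J, PhiMap_smul D J, PhiMap_injective hJ hprofin,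
    Set.Subset.antisymm (Set.range_subset_iff.2 (PhiMap_mem_procellular hJ))
      fun _ hx => exists_PhiMap_eq_of_mem_procellular hJ hprofin hx⟩

/-- for a cell datum of profinite type, the `R`-linear map `Φ` from
coefficient functions to `∏_{P∈Π} A_P` is injective with image exactly the procellular
algebra `Â`; i.e. elements of `Â` correspond bijectively to formal infinite sums
`Σ a(T,T')·C(T,T')`. -/
theorem procellular_eq_formal_sums (R A Λ : Type*) [CommRing R] [Ring A] [Algebra R A]
    [PartialOrder Λ] (M : Λ → Type*) [∀ l, Fintype (M l)] (D : CellDatum R A Λ M)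
    (hinf : Infinite Λ) (hprofin : ∀ a : Λ, {l : Λ | a ≤ l}.Finite)
    (J : ∀ _ : FiniteCoideal Λ, TwoSidedIdeal A)
    (hJ : ∀ (P : FiniteCoideal Λ) (x : A), x ∈ J P ↔ x ∈ D.IP P.1) :
    (∀ f g : (Σ l : Λ, M l × M l) → R, PhiMap D J (f + g) = PhiMap D J f + PhiMap D J g) ∧
    (∀ (c : R) (f : (Σ l : Λ, M l × M l) → R), PhiMap D J (c • f) = c • PhiMap D J f) ∧
    Function.Injective (PhiMap D J) ∧
    Set.range (PhiMap D J) = Procellular D J :=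
  procellular_eq_formal_sums_general R A Λ M D hprofin J hJ
end
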